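/- Let T > 0, L ≥ 0, let w : [0,T] → ℝ^n be L-square Lipschitz, and let δ, γ > 0 be such that γ = (ℓ+1)δ for some integer ℓ ≥ 0 and both T/δ and T/γ are positive integers. Then ‖δ · Σ_{k=0}^{T/δ−1} w(kδ)w(kδ)^T − γ · Σ_{k=0}^{T/γ−1} w(kγ)w(kγ)^T‖ ≤ (1/2)(γ−δ)TL = (1/2)ℓδTL, where ‖·‖ is the operator norm induced by the Euclidean norm. -/

import Mathlib

open MeasureTheory Matrix

noncomputable def opNorm {ι κ : Type} [Fintype ι] [Fintype κ] [DecidableEq κ]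
    (M : Matrix ι κ ℝ) : ℝ :=
  ‖LinearMap.toContinuousLinearMap (Matrix.toEuclideanLin M)‖

noncomputable def euclNorm {ι : Type} [Fintype ι] (v : ι → ℝ) : ℝ :=
  Real.sqrt (∑ i, v i ^ 2)

/-- `v` is `L`-square Lipschitz on `[0,T]`. -/
def SqLipschitz {ι : Type} [Fintype ι] [DecidableEq ι] (T L : ℝ) (v : ℝ → ι → ℝ) : Prop :=
  ∀ t₁ ∈ Set.Icc (0:ℝ) T, ∀ t₂ ∈ Set.Icc (0:ℝ) T,
    opNorm (Matrix.vecMulVec (v t₁) (v t₁) - Matrix.vecMulVec (v t₂) (v t₂)) ≤ L * |t₁ - t₂|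

/-- The set of all partition sums appearing in the definition of total square variation. -/
def partitionSums {ι : Type} [Fintype ι] [DecidableEq ι] (T : ℝ) (v : ℝ → ι → ℝ) : Set ℝ :=
  { s | ∃ (N : ℕ) (t : Fin (N + 1) → ℝ), Monotone t ∧ t 0 = 0 ∧ t (Fin.last N) = T ∧
      s = ∑ i : Fin N, opNorm (Matrix.vecMulVec (v (t i.succ)) (v (t i.succ)) -
            Matrix.vecMulVec (v (t i.castSucc)) (v (t i.castSucc))) }

/-- Total square variation `V_0^T(v)`. -/
noncomputable def totalSqVar {ι : Type} [Fintype ι] [DecidableEq ι] (T : ℝ) (v : ℝ → ι → ℝ) : ℝ :=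
  sSup (partitionSums T v)

/-- `V_0^T(v) ≤ c`, phrased via all partition sums. -/
def TotalSqVarLE {ι : Type} [Fintype ι] [DecidableEq ι] (T : ℝ) (v : ℝ → ι → ℝ) (c : ℝ) : Prop :=
  ∀ s ∈ partitionSums T v, s ≤ c

/-- Loewner order `M ≤ N`. -/
def loewnerLE {ι : Type} [Fintype ι] (M N : Matrix ι ι ℝ) : Prop := (N - M).PosSemidef

/-- Strict Loewner order `M < N`. -/
def loewnerLT {ι : Type} [Fintype ι] (M N : Matrix ι ι ℝ) : Prop := (N - M).PosDef

/-- `M` is negative definite. -/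
def negDefQ {ι : Type} [Fintype ι] (M : Matrix ι ι ℝ) : Prop := (-M).PosDef

/-- Entrywise Lebesgue integral of a matrix-valued function on `[0,T]`. -/
noncomputable def matIntegral {ι κ : Type} (T : ℝ) (f : ℝ → Matrix ι κ ℝ) : Matrix ι κ ℝ :=
  Matrix.of fun i j => ∫ t in Set.Ioc (0:ℝ) T, f t i j

/-- `δ • Σ_{k<N} v(kδ) v(kδ)ᵀ`. -/
noncomputable def sampledGram {ι : Type} [Fintype ι] (δ : ℝ) (N : ℕ) (v : ℝ → ι → ℝ) :
    Matrix ι ι ℝ :=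
  δ • ∑ k ∈ Finset.range N, Matrix.vecMulVec (v (k * δ)) (v (k * δ))

/-- The noise signal `ẋ − Ax − Bu` associated with a candidate system `(A,B)`. -/
def noiseSig {n m : ℕ} (xdot x : ℝ → Fin n → ℝ) (u : ℝ → Fin m → ℝ)
    (A : Matrix (Fin n) (Fin n) ℝ) (B : Matrix (Fin n) (Fin m) ℝ) : ℝ → Fin n → ℝ :=
  fun t => xdot t - A.mulVec (x t) - B.mulVec (u t)

/-- `Σ(Q')`: systems consistent with the continuous-time data. -/
def SigmaCont {n m : ℕ} (T : ℝ) (xdot x : ℝ → Fin n → ℝ) (u : ℝ → Fin m → ℝ)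
    (Q' : Matrix (Fin n) (Fin n) ℝ) :
    Set (Matrix (Fin n) (Fin n) ℝ × Matrix (Fin n) (Fin m) ℝ) :=
  { AB | loewnerLE (matIntegral T fun t =>
      Matrix.vecMulVec (noiseSig xdot x u AB.1 AB.2 t) (noiseSig xdot x u AB.1 AB.2 t)) Q' }

/-- `Σ^δ(Q')`: systems consistent with the data sampled at stepsize `δ` (with `N = T/δ` samples). -/
def SigmaDisc {n m : ℕ} (δ : ℝ) (N : ℕ) (xdot x : ℝ → Fin n → ℝ) (u : ℝ → Fin m → ℝ)
    (Q' : Matrix (Fin n) (Fin n) ℝ) :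
    Set (Matrix (Fin n) (Fin n) ℝ × Matrix (Fin n) (Fin m) ℝ) :=
  { AB | loewnerLE (sampledGram δ N (noiseSig xdot x u AB.1 AB.2)) Q' }

/-- `M^L_{x,u}`: systems whose associated noise is `L`-square Lipschitz. -/
def Mset {n m : ℕ} (T L : ℝ) (xdot x : ℝ → Fin n → ℝ) (u : ℝ → Fin m → ℝ) :
    Set (Matrix (Fin n) (Fin n) ℝ × Matrix (Fin n) (Fin m) ℝ) :=
  { AB | SqLipschitz T L (noiseSig xdot x u AB.1 AB.2) }

/-- `N^L_{x,u}`: systems whose associated noise has total square variation at most `LT/2`. -/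
def Nset {n m : ℕ} (T L : ℝ) (xdot x : ℝ → Fin n → ℝ) (u : ℝ → Fin m → ℝ) :
    Set (Matrix (Fin n) (Fin n) ℝ × Matrix (Fin n) (Fin m) ℝ) :=
  { AB | TotalSqVarLE T (noiseSig xdot x u AB.1 AB.2) (L * T / 2) }

/-- The stacked signal `ξ(t) = (ẋ(t); −x(t); −u(t))`. -/
def xiSig {n m : ℕ} (xdot x : ℝ → Fin n → ℝ) (u : ℝ → Fin m → ℝ) (t : ℝ) :
    (Fin n ⊕ (Fin n ⊕ Fin m)) → ℝ :=
  Sum.elim (xdot t) (Sum.elim (fun i => -(x t i)) (fun j => -(u t j)))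

/-- The block matrix `[[Q + βI, P, PKᵀ], [P, 0, 0], [KP, 0, 0]]`. -/
noncomputable def lmiBlock {n m : ℕ} (Q P : Matrix (Fin n) (Fin n) ℝ)
    (K : Matrix (Fin m) (Fin n) ℝ) (β : ℝ) :
    Matrix (Fin n ⊕ (Fin n ⊕ Fin m)) (Fin n ⊕ (Fin n ⊕ Fin m)) ℝ :=
  Matrix.fromBlocks (Q + β • (1 : Matrix (Fin n) (Fin n) ℝ))
    (Matrix.of fun i jj => Sum.elim (fun j => P i j) (fun j => (P * K.transpose) i j) jj)
    (Matrix.of fun ii j => Sum.elim (fun i => P i j) (fun k => (K * P) k j) ii)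
    0

/-- The continuous-data LMI. -/
def ContLMI {n m : ℕ} (T : ℝ) (xdot x : ℝ → Fin n → ℝ) (u : ℝ → Fin m → ℝ)
    (Q P : Matrix (Fin n) (Fin n) ℝ) (K : Matrix (Fin m) (Fin n) ℝ) (β : ℝ) : Prop :=
  (matIntegral T (fun t => Matrix.vecMulVec (xiSig xdot x u t) (xiSig xdot x u t)) -
    lmiBlock Q P K β).PosSemidef

/-- The sampled-data LMI at stepsize `δ` (with `N = T/δ` samples). -/
def SampLMI {n m : ℕ} (δ : ℝ) (N : ℕ) (xdot x : ℝ → Fin n → ℝ) (u : ℝ → Fin m → ℝ)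
    (Q P : Matrix (Fin n) (Fin n) ℝ) (K : Matrix (Fin m) (Fin n) ℝ) (β : ℝ) : Prop :=
  (sampledGram δ N (xiSig xdot x u) - lmiBlock Q P K β).PosSemidef

/-! Group the fine samples into blocks of `ℓ + 1` consecutive ones; each block starts at a coarse
sample. Within a block the `r`-th fine term differs from the coarse one by at most `L r δ`, so a
block contributes at most `L δ² ℓ(ℓ+1)/2`, and there are `T/γ` blocks. -/

open Finset

section OpNorm

variable {ι κ : Type} [Fintype ι] [Fintype κ] [DecidableEq κ]

lemma opNorm_smul (a : ℝ) (M : Matrix ι κ ℝ) : opNorm (a • M) = |a| * opNorm M := by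
  simp only [opNorm, _root_.map_smul, norm_smul, Real.norm_eq_abs]

lemma opNorm_sum_le {α : Type*} (s : Finset α) (f : α → Matrix ι κ ℝ) :
    opNorm (∑ i ∈ s, f i) ≤ ∑ i ∈ s, opNorm (f i) := by
  simp only [opNorm, map_sum]
  exact norm_sum_le _ _

end OpNorm

lemma Finset.sum_range_mul_eq_sum_sum {M : Type*} [AddCommMonoid M] (f : ℕ → M) (a b : ℕ) :
    ∑ k ∈ range (a * b), f k = ∑ j ∈ range a, ∑ r ∈ range b, f (j * b + r) := by
  induction a with
  | zero => simp
  | succ a ih => rw [Nat.succ_mul, sum_range_add, ih, sum_range_succ]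

lemma Finset.sum_range_succ_natCast_id (ℓ : ℕ) :
    ∑ r ∈ range (ℓ + 1), (r : ℝ) = ℓ * (ℓ + 1) / 2 := by
  have h := congrArg (Nat.cast (R := ℝ)) (sum_range_id_mul_two (ℓ + 1))
  push_cast [Nat.add_sub_cancel] at h
  linarith

section SampledGram

variable {ι : Type} [Fintype ι]

lemma sampledGram_sub_sampledGram_blocks (v : ℝ → ι → ℝ) (δ : ℝ) (ℓ N : ℕ) :
    sampledGram δ (N * (ℓ + 1)) v - sampledGram ((ℓ + 1) * δ) N v =
      δ • ∑ j ∈ range N, ∑ r ∈ range (ℓ + 1),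
        (vecMulVec (v (j * ((ℓ + 1) * δ) + r * δ)) (v (j * ((ℓ + 1) * δ) + r * δ)) -
          vecMulVec (v (j * ((ℓ + 1) * δ))) (v (j * ((ℓ + 1) * δ)))) := by
  have hW : ∀ j r : ℕ, v ((j * (ℓ + 1) + r : ℕ) * δ) = v (j * ((ℓ + 1) * δ) + r * δ) := by
    intro j r; push_cast; ring_nf
  simp only [sampledGram, sum_range_mul_eq_sum_sum, hW, sum_sub_distrib, sum_const, card_range,
    ← Nat.cast_smul_eq_nsmul ℝ, smul_sub, smul_sum, smul_smul]
  congr 1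
  exact sum_congr rfl fun j _ => by push_cast; rw [mul_comm]

variable [DecidableEq ι]

lemma opNorm_sampledGram_sub_le {T L δ : ℝ} {v : ℝ → ι → ℝ} (hδ : 0 ≤ δ) (ℓ N : ℕ)
    (hT : (N * (ℓ + 1) : ℕ) * δ ≤ T) (hv : SqLipschitz T L v) :
    opNorm (sampledGram δ (N * (ℓ + 1)) v - sampledGram ((ℓ + 1) * δ) N v) ≤
      N * L * δ ^ 2 * (ℓ * (ℓ + 1) / 2) := by
  have hstep : ∀ j ∈ range N, ∀ r ∈ range (ℓ + 1),
      opNorm (vecMulVec (v (j * ((ℓ + 1) * δ) + r * δ)) (v (j * ((ℓ + 1) * δ) + r * δ)) -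
        vecMulVec (v (j * ((ℓ + 1) * δ))) (v (j * ((ℓ + 1) * δ)))) ≤ L * (r * δ) := by
    intro j hj r hr
    have hjr : j * (ℓ + 1) + r ≤ N * (ℓ + 1) := by nlinarith [mem_range.1 hj, mem_range.1 hr]
    have hle : ((j * (ℓ + 1) + r : ℕ) : ℝ) * δ ≤ T :=
      (mul_le_mul_of_nonneg_right (by exact_mod_cast hjr) hδ).trans hT
    push_cast at hle
    have hrδ : 0 ≤ (r : ℝ) * δ := by positivity
    have h := hv (j * ((ℓ + 1) * δ) + r * δ) ⟨by positivity, by linarith⟩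
      (j * ((ℓ + 1) * δ)) ⟨by positivity, by linarith⟩
    rwa [add_sub_cancel_left, abs_of_nonneg hrδ] at h
  rw [sampledGram_sub_sampledGram_blocks, opNorm_smul, abs_of_nonneg hδ]
  calc δ * opNorm _ ≤ δ * ∑ j ∈ range N, ∑ r ∈ range (ℓ + 1), L * (r * δ) := by
        gcongr
        refine (opNorm_sum_le _ _).trans (sum_le_sum fun j hj => (opNorm_sum_le _ _).trans ?_)
        exact sum_le_sum (hstep j hj)
    _ = N * L * δ ^ 2 * (ℓ * (ℓ + 1) / 2) := by
        simp only [← mul_sum, ← sum_mul, sum_const, card_range, nsmul_eq_mul,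
          sum_range_succ_natCast_id]
        ring

end SampledGram

theorem stmt17_general {n : ℕ} (T L δ γ : ℝ) (hδ : 0 < δ)
    (ℓ : ℕ) (hγ : γ = (ℓ + 1) * δ)
    (Nδ Nγ : ℕ) (hTδ : T = Nδ * δ) (hTγ : T = Nγ * γ)
    (w : ℝ → Fin n → ℝ) (hw : SqLipschitz T L w) :
    opNorm (sampledGram δ Nδ w - sampledGram γ Nγ w) ≤ (γ - δ) * T * L / 2 ∧
      (γ - δ) * T * L / 2 = ℓ * δ * T * L / 2 := by
  have hN : Nδ = Nγ * (ℓ + 1) := by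
    have h : (Nδ : ℝ) * δ = ((Nγ * (ℓ + 1) : ℕ) : ℝ) * δ := by
      push_cast; rw [← hTδ, hTγ, hγ]; ring
    exact_mod_cast mul_right_cancel₀ hδ.ne' h
  refine ⟨?_, by rw [hγ]; ring⟩
  subst hN hγ
  calc _ ≤ Nγ * L * δ ^ 2 * (ℓ * (ℓ + 1) / 2) := opNorm_sampledGram_sub_le hδ.le ℓ Nγ hTδ.ge hw
    _ = _ := by rw [hTγ]; ring

theorem stmt17 {n : ℕ} (T L δ γ : ℝ) (hT : 0 < T) (hL : 0 ≤ L) (hδ : 0 < δ)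
    (ℓ : ℕ) (hγ : γ = (ℓ + 1) * δ)
    (Nδ Nγ : ℕ) (hNδ : 0 < Nδ) (hNγ : 0 < Nγ) (hTδ : T = Nδ * δ) (hTγ : T = Nγ * γ)
    (w : ℝ → Fin n → ℝ) (hw : SqLipschitz T L w) :
    opNorm (sampledGram δ Nδ w - sampledGram γ Nγ w) ≤ (γ - δ) * T * L / 2 ∧
      (γ - δ) * T * L / 2 = ℓ * δ * T * L / 2 :=
  stmt17_general T L δ γ hδ ℓ hγ Nδ Nγ hTδ hTγ w hw
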